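/- For (λ,μ) ∈ J_{m,ℓ} and any standard tableau T on λ/μ^, the set of w ∈ Ẇ with wT standard equals Ż^{λ/μ^}_T = {w ∈ Ẇ : ⟨ζ_T, α^∨⟩ ∉ {-1,1} for all α ∈ R(w)}; equivalently Tab^{RC}(λ/μ^) = Ż^{λ/μ^}_T · T. -/

import Mathlib

/-- The periodic skew diagram `λ/μ^` attached to `(λ,μ)` (rows are indexed
`1,…,m`, with the `0`-indexed data `lam i = λ_{i+1}`, `mu i = μ_{i+1}`):
`λ/μ^ = ⋃_{k∈ℤ} (λ/μ + k(m,-ℓ))`. -/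
def hatD (m ℓ : ℕ) (lam mu : ℕ → ℤ) : Set (ℤ × ℤ) :=
  {p | ∃ (k : ℤ) (i : ℕ), i < m ∧ p.1 = (i : ℤ) + 1 + k * m ∧
        mu i + 1 ≤ p.2 + k * ℓ ∧ p.2 + k * ℓ ≤ lam i}

/-- `v ∈ P̂⁺_{m,ℓ}`: weakly decreasing with spread at most `ℓ`. -/
def isDom (m ℓ : ℕ) (v : ℕ → ℤ) : Prop :=
  (∀ i j : ℕ, i ≤ j → j < m → v j ≤ v i) ∧ v 0 - v (m - 1) ≤ (ℓ : ℤ)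

/-- `(λ,μ) ∈ 𝒥_{m,ℓ}`. -/
def memJ (n m ℓ : ℕ) (lam mu : ℕ → ℤ) : Prop :=
  1 ≤ m ∧ isDom m ℓ lam ∧ isDom m ℓ mu ∧ (∀ i < m, mu i ≤ lam i) ∧
    (∑ i ∈ Finset.range m, (lam i - mu i)) = (n : ℤ)

/-- `(λ,μ) ∈ 𝒥*_{m,ℓ}` (no empty rows: `λ_i > μ_i`). -/
def memJstar (n m ℓ : ℕ) (lam mu : ℕ → ℤ) : Prop :=
  1 ≤ m ∧ isDom m ℓ lam ∧ isDom m ℓ mu ∧ (∀ i < m, mu i < lam i) ∧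
    (∑ i ∈ Finset.range m, (lam i - mu i)) = (n : ℤ)

/-- A tableau on the (`(m,-ℓ)`-periodic) diagram `Λ`: a bijection `Λ → ℤ`
with `T(u + (m,-ℓ)) = T(u) + n`. -/
def IsTab (n m ℓ : ℕ) (Λ : Set (ℤ × ℤ)) (T : ℤ × ℤ → ℤ) : Prop :=
  Set.BijOn T Λ Set.univ ∧ ∀ u ∈ Λ, T (u + ((m : ℤ), -(ℓ : ℤ))) = T u + (n : ℤ)

/-- Row increasing. -/
def RowInc (Λ : Set (ℤ × ℤ)) (T : ℤ × ℤ → ℤ) : Prop :=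
  ∀ a b : ℤ, (a, b) ∈ Λ → (a, b + 1) ∈ Λ → T (a, b) < T (a, b + 1)

/-- Column increasing. -/
def ColInc (Λ : Set (ℤ × ℤ)) (T : ℤ × ℤ → ℤ) : Prop :=
  ∀ a b : ℤ, (a, b) ∈ Λ → (a + 1, b) ∈ Λ → T (a, b) < T (a + 1, b)

/-- A standard (row-column increasing) tableau. -/
def IsStdTab (n m ℓ : ℕ) (Λ : Set (ℤ × ℤ)) (T : ℤ × ℤ → ℤ) : Prop :=
  IsTab n m ℓ Λ T ∧ RowInc Λ T ∧ ColInc Λ T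

/-- `F` is the content function of the tableau `T`: `F(T(a,b)) = b - a`. -/
def IsContent (Λ : Set (ℤ × ℤ)) (T : ℤ × ℤ → ℤ) (F : ℤ → ℤ) : Prop :=
  ∀ u ∈ Λ, F (T u) = u.2 - u.1

/-!
Write `λ/μ^` as the skew shape `{(a, b) | g a < b ≤ f a}` cut out by the periodic extensions
`f, g` of `λ, μ`; these are antitone, so a row- and column-increasing filling is strictly monotone
for the product order on cells. Two cells whose contents differ by one are comparable in that
order. Hence if `T` and `wT` are both standard, `wT` keeps the relative order of every pair of
labels with contents differing by one, which is the condition on `R(w)`. Conversely, a row or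
column step of `T` joins labels `x < y` with contents differing by one; translating by a multiple
of `n` (which moves `w` and the content equivariantly) brings `x` into `[1, n]`, where the
condition forbids `w y < w x` unless `y ≡ x (mod n)`, and then `w y - w x = y - x > 0`.
-/

open Set Function

def skewShape (f g : ℤ → ℤ) : Set (ℤ × ℤ) :=
  {p | g p.1 < p.2 ∧ p.2 ≤ f p.1}

theorem strictMonoOn_skewShape {f g : ℤ → ℤ} (hf : Antitone f) (hg : Antitone g)
    {S : ℤ × ℤ → ℤ} (hrow : RowInc (skewShape f g) S) (hcol : ColInc (skewShape f g) S) :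
    StrictMonoOn S (skewShape f g) := by
  have hrow' (a : ℤ) : StrictMonoOn (fun b => S (a, b)) {b | (a, b) ∈ skewShape f g} :=
    strictMonoOn_of_lt_add_one ⟨fun _ h₁ _ h₂ _ hb => ⟨h₁.1.trans_le hb.1, hb.2.trans h₂.2⟩⟩
      fun b _ h h' => hrow a b h h'
  have hcol' (b : ℤ) : StrictMonoOn (fun a => S (a, b)) {a | (a, b) ∈ skewShape f g} :=
    strictMonoOn_of_lt_add_one
      ⟨fun _ h₁ _ h₂ _ ha => ⟨(hg ha.1).trans_lt h₁.1, h₂.2.trans (hf ha.2)⟩⟩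
      fun a _ h h' => hcol a b h h'
  rintro ⟨a, b⟩ hp ⟨c, d⟩ hq hpq
  have hcorner : (c, b) ∈ skewShape f g :=
    ⟨(hg hpq.le.1).trans_lt hp.1, hpq.le.2.trans hq.2⟩
  rcases Prod.lt_iff.1 hpq with ⟨hac, hbd⟩ | ⟨hac, hbd⟩
  · exact (hcol' b hp hcorner hac).trans_le ((hrow' c).monotoneOn hcorner hq hbd)
  · exact ((hcol' b).monotoneOn hp hcorner hac).trans_lt (hrow' c hcorner hq hbd)

theorem le_or_le_of_abs_content_sub_le_one {u v : ℤ × ℤ}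
    (h : |(u.2 - u.1) - (v.2 - v.1)| ≤ 1) : u ≤ v ∨ v ≤ u := by
  rw [abs_le] at h
  simp only [Prod.le_def]
  omega

theorem StrictMonoOn.lt_of_lt_of_le_or_le {α β γ : Type*} [PartialOrder α] [Preorder β]
    [Preorder γ] {s : Set α} {S : α → β} {S' : α → γ} (hS : StrictMonoOn S s)
    (hS' : StrictMonoOn S' s) {u v : α} (hu : u ∈ s) (hv : v ∈ s) (huv : u ≤ v ∨ v ≤ u)
    (h : S u < S v) : S' u < S' v := by
  rcases huv with huv | hvu
  · exact hS' hu hv (huv.lt_of_ne (by rintro rfl; exact lt_irrefl _ h))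
  · exact absurd h (hS.monotoneOn hv hu hvu).not_gt

section PeriodicExtension

variable {m ℓ : ℕ}

/-- The extension of row data `f 0, …, f (m - 1)` (for rows `1, …, m`) to all rows `a : ℤ`,
subject to `periodicExt (a + m) = periodicExt a - ℓ`. -/
def periodicExt (m ℓ : ℕ) (f : ℕ → ℤ) (a : ℤ) : ℤ :=
  f ((a - 1) % m).toNat - (a - 1) / m * ℓ

theorem periodicExt_eq (f : ℕ → ℤ) {i : ℕ} (hi : i < m) (k : ℤ) :
    periodicExt m ℓ f (i + 1 + k * m) = f i - k * ℓ := by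
  have hi' : (i : ℤ) < m := by exact_mod_cast hi
  have hm : (m : ℤ) ≠ 0 := by omega
  have hsub : (i : ℤ) + 1 + k * m - 1 = i + k * m := by ring
  rw [periodicExt, hsub, Int.add_mul_emod_self_right, Int.emod_eq_of_lt (by omega) hi',
    Int.add_mul_ediv_right _ _ hm, Int.ediv_eq_zero_of_lt (by omega) hi', zero_add]
  simp

theorem exists_eq_add_one_add_mul (hm : 0 < m) (a : ℤ) :
    ∃ i < m, ∃ k : ℤ, a = i + 1 + k * m := by
  have hr := Int.emod_nonneg (a - 1) (by omega : (m : ℤ) ≠ 0)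
  have hr' := Int.emod_lt_of_pos (a - 1) (by omega : (0 : ℤ) < m)
  have he := Int.emod_add_mul_ediv (a - 1) m
  refine ⟨((a - 1) % m).toNat, by omega, (a - 1) / m, ?_⟩
  rw [Int.toNat_of_nonneg hr]
  linarith

theorem antitone_periodicExt (hm : 0 < m) {f : ℕ → ℤ} (hf : isDom m ℓ f) :
    Antitone (periodicExt m ℓ f) := by
  refine antitone_of_add_one_le fun a _ => ?_
  obtain ⟨i, hi, k, rfl⟩ := exists_eq_add_one_add_mul hm a
  by_cases hlast : i + 1 < m
  · rw [show (i : ℤ) + 1 + k * m + 1 = ((i + 1 : ℕ) : ℤ) + 1 + k * m by push_cast; ring,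
      periodicExt_eq f hlast, periodicExt_eq f hi]
    linarith [hf.1 i (i + 1) (by omega) hlast]
  · obtain rfl : i = m - 1 := by omega
    rw [show ((m - 1 : ℕ) : ℤ) + 1 + k * m + 1 = ((0 : ℕ) : ℤ) + 1 + (k + 1) * m by
        push_cast [hm]; ring, periodicExt_eq f hm, periodicExt_eq f hi]
    linarith [hf.2]

theorem hatD_eq_skewShape (hm : 0 < m) (lam mu : ℕ → ℤ) :
    hatD m ℓ lam mu = skewShape (periodicExt m ℓ lam) (periodicExt m ℓ mu) := by
  ext ⟨a, b⟩
  constructor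
  · rintro ⟨k, i, hi, rfl, hmu, hlam⟩
    simp only [skewShape, mem_ofPred_eq, periodicExt_eq _ hi]
    constructor <;> linarith
  · rintro ⟨hmu, hlam⟩
    obtain ⟨i, hi, k, rfl⟩ := exists_eq_add_one_add_mul hm a
    rw [periodicExt_eq _ hi] at hmu hlam
    exact ⟨k, i, hi, rfl, by linarith, by linarith⟩

theorem strictMonoOn_hatD (hm : 0 < m) {lam mu : ℕ → ℤ} (hlam : isDom m ℓ lam)
    (hmu : isDom m ℓ mu) {S : ℤ × ℤ → ℤ} (hrow : RowInc (hatD m ℓ lam mu) S)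
    (hcol : ColInc (hatD m ℓ lam mu) S) : StrictMonoOn S (hatD m ℓ lam mu) := by
  rw [hatD_eq_skewShape hm] at hrow hcol ⊢
  exact strictMonoOn_skewShape (antitone_periodicExt hm hlam) (antitone_periodicExt hm hmu)
    hrow hcol

theorem add_mem_hatD {lam mu : ℕ → ℤ} {u : ℤ × ℤ} (hu : u ∈ hatD m ℓ lam mu) :
    u + ((m : ℤ), -(ℓ : ℤ)) ∈ hatD m ℓ lam mu := by
  obtain ⟨k, i, hi, h1, h2, h3⟩ := hu
  refine ⟨k + 1, i, hi, ?_, ?_, ?_⟩ <;> simp only [Prod.fst_add, Prod.snd_add] <;> linarith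

end PeriodicExtension

theorem IsContent.map_add {n m ℓ : ℕ} {Λ : Set (ℤ × ℤ)} {T : ℤ × ℤ → ℤ} {F : ℤ → ℤ}
    (hF : IsContent Λ T F) (hT : IsTab n m ℓ Λ T)
    (hΛ : ∀ u ∈ Λ, u + ((m : ℤ), -(ℓ : ℤ)) ∈ Λ) (j : ℤ) :
    F (j + n) = F j + -(m + ℓ) := by
  obtain ⟨u, hu, rfl⟩ := hT.1.surjOn (mem_univ j)
  rw [← hT.2 u hu, hF _ (hΛ u hu), hF u hu]
  simp only [Prod.fst_add, Prod.snd_add]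
  ring

theorem apply_lt_apply_of_abs_sub_eq_one {n c : ℤ} (hn : 0 < n) {w F : ℤ → ℤ}
    (hw : Injective w) (hwp : ∀ j, w (j + n) = w j + n) (hFp : ∀ j, F (j + n) = F j + c)
    (hZ : ∀ i j : ℤ, 1 ≤ i → i ≤ n → i < j → ¬ ((j - i) % n = 0) →
      w j < w i → F i - F j ≠ 1 ∧ F i - F j ≠ -1)
    {x y : ℤ} (hxy : x < y) (hFxy : |F x - F y| = 1) : w x < w y := by
  let w' : AddConstMap ℤ ℤ n n := ⟨w, hwp⟩
  let F' : AddConstMap ℤ ℤ n c := ⟨F, hFp⟩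
  by_cases hdvd : n ∣ y - x
  · obtain ⟨t, ht⟩ := hdvd
    have ht0 : 0 < t := pos_of_mul_pos_right (ht ▸ sub_pos.2 hxy) hn.le
    have hwy : w y = w x + t • n := by
      rw [show y = x + t • n by rw [smul_eq_mul]; linarith]
      exact AddConstMapClass.map_add_zsmul w' x t
    rw [hwy, smul_eq_mul]
    nlinarith
  · by_contra hle
    have hwyx : w y < w x :=
      (not_lt.1 hle).lt_of_ne fun h => hxy.ne' (hw h)
    set k := toIocDiv hn 0 x
    have hi := toIocMod_mem_Ioc hn 0 x
    rw [← self_sub_toIocDiv_zsmul] at hi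
    have hwk (z : ℤ) : w (z - k • n) = w z - k • n := AddConstMapClass.map_sub_zsmul w' z k
    have hFk (z : ℤ) : F (z - k • n) = F z - k • c := AddConstMapClass.map_sub_zsmul F' z k
    have hmod : ¬ ((y - k • n - (x - k • n)) % n = 0) := by
      rwa [sub_sub_sub_cancel_right, ← Int.dvd_iff_emod_eq_zero]
    have hZxy := hZ _ _ (by linarith [hi.1]) (by linarith [hi.2]) (by linarith) hmod
      (by rw [hwk, hwk]; linarith)
    rw [hFk, hFk, sub_sub_sub_cancel_right] at hZxy
    rcases (abs_eq zero_le_one).1 hFxy with h | h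
    · exact hZxy.1 h
    · exact hZxy.2 h

/-- for a standard tableau `T` on `λ/μ^` with content `F = C_T`
and `w` in the extended affine Weyl group, `wT` is standard iff
`w ∈ Ż^{λ/μ^}_T`, i.e. iff `⟨ζ_T, α^∨⟩ ∉ {-1,1}` for every `α ∈ R(w)`.
(Positive roots are the `α_{ij}` with `1 ≤ i ≤ n`, `i < j`, `i ≢ j (mod n)`;
`α_{ij} ∈ R(w)` iff `w(i) > w(j)`; and `⟨ζ_T, α_{ij}^∨⟩ = C_T(i) - C_T(j)`.) -/
theorem std_iff_Z (n m ℓ : ℕ) (hn : 2 ≤ n) (lam mu : ℕ → ℤ)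
    (hJ : memJ n m ℓ lam mu)
    (T : ℤ × ℤ → ℤ) (hT : IsStdTab n m ℓ (hatD m ℓ lam mu) T)
    (F : ℤ → ℤ) (hF : IsContent (hatD m ℓ lam mu) T F)
    (w : ℤ → ℤ) (hwb : Function.Bijective w)
    (hwp : ∀ j : ℤ, w (j + (n : ℤ)) = w j + (n : ℤ)) :
    IsStdTab n m ℓ (hatD m ℓ lam mu) (fun u => w (T u)) ↔
      ∀ i j : ℤ, 1 ≤ i → i ≤ (n : ℤ) → i < j → ¬ ((j - i) % (n : ℤ) = 0) →
        w j < w i → F i - F j ≠ 1 ∧ F i - F j ≠ -1 := by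
  obtain ⟨hm, hlam, hmu, -, -⟩ := hJ
  obtain ⟨hTab, hrow, hcol⟩ := hT
  have hTmono := strictMonoOn_hatD hm hlam hmu hrow hcol
  constructor
  · rintro ⟨-, hwrow, hwcol⟩ i j - - hij - hwji
    have hwTmono := strictMonoOn_hatD hm hlam hmu hwrow hwcol
    obtain ⟨u, hu, rfl⟩ := hTab.1.surjOn (mem_univ i)
    obtain ⟨v, hv, rfl⟩ := hTab.1.surjOn (mem_univ j)
    rw [hF u hu, hF v hv]
    refine ⟨fun h => ?_, fun h => ?_⟩ <;>
      exact hwji.not_gt (hTmono.lt_of_lt_of_le_or_le hwTmono hu hv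
        (le_or_le_of_abs_content_sub_le_one (by rw [h]; norm_num)) hij)
  · intro hZ
    have hstep {u v : ℤ × ℤ} (hu : u ∈ hatD m ℓ lam mu) (hv : v ∈ hatD m ℓ lam mu)
        (huv : T u < T v) (hc : |(u.2 - u.1) - (v.2 - v.1)| = 1) : w (T u) < w (T v) :=
      apply_lt_apply_of_abs_sub_eq_one (by omega) hwb.1 hwp
        (hF.map_add hTab fun _ => add_mem_hatD) hZ huv (by rwa [hF u hu, hF v hv])
    refine ⟨⟨(bijOn_univ.2 hwb).comp hTab.1, fun u hu => ?_⟩,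
      fun a b h h' => hstep h h' (hrow a b h h') (by norm_num),
      fun a b h h' => hstep h h' (hcol a b h h') (by norm_num)⟩
    simp only [hTab.2 u hu, hwp]
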